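/- Let g be a reduced-or-not word of length n in α, α⁻¹, β, β⁻¹ with a(g) = b(g) = 0, and let n_α (resp. n_β) be the number of letters equal to α (resp. β), so n = 2(n_α + n_β). Then ν(g) ≤ n_α · n_β ≤ (n/4)². -/

import Mathlib

/-! Common setup: free group on two generators, Heisenberg group of unipotent
upper-triangular 3×3 integer matrices, the Heisenberg invariant. -/

noncomputable section

/-- The free group on two generators. -/
abbrev F : Type := FreeGroup Bool

/-- The generator `α` of the free group. -/
def Wα : F := FreeGroup.of false

/-- The generator `β` of the free group. -/
def Wβ : F := FreeGroup.of true

/-- `F₃`, the third term of the lower central series `F₁ = F`, `F_{n+1} = [F, Fₙ]`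
(Mathlib's `lowerCentralSeries` is 0-indexed). -/
abbrev F₃ : Subgroup F := (⊤ : Subgroup F).lowerCentralSeries 2

/-- `H = F/F₃`. -/
abbrev H : Type := F ⧸ F₃

/-- The unipotent upper-triangular matrix `M(a,b,c)`. -/
def Mmat (a b c : ℤ) : Matrix (Fin 3) (Fin 3) ℤ := !![1, a, c; 0, 1, b; 0, 0, 1]

theorem Mmat_mul (a b c a' b' c' : ℤ) :
    Mmat a b c * Mmat a' b' c' = Mmat (a + a') (b + b') (c + c' + a * b') := by
  simp [Mmat, Matrix.mul_fin_three]; ring_nf; (try simp)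

theorem Mmat_zero : Mmat 0 0 0 = 1 := by
  simp [Mmat, Matrix.one_fin_three]

/-- `M(a,b,c)` as a unit of the matrix ring. -/
def Munit (a b c : ℤ) : (Matrix (Fin 3) (Fin 3) ℤ)ˣ :=
  ⟨Mmat a b c, Mmat (-a) (-b) (a * b - c),
    by rw [Mmat_mul]; rw [show a + -a = 0 by ring, show b + -b = 0 by ring,
      show c + (a*b - c) + a * (-b) = 0 by ring]; exact Mmat_zero,
    by rw [Mmat_mul]; rw [show -a + a = 0 by ring, show -b + b = 0 by ring,
      show (a*b - c) + c + (-a) * b = 0 by ring]; exact Mmat_zero⟩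

theorem Munit_mul (a b c a' b' c' : ℤ) :
    Munit a b c * Munit a' b' c' = Munit (a + a') (b + b') (c + c' + a * b') :=
  Units.ext (Mmat_mul a b c a' b' c')

theorem Munit_one : Munit 0 0 0 = 1 := Units.ext Mmat_zero

theorem Munit_inv (a b c : ℤ) : (Munit a b c)⁻¹ = Munit (-a) (-b) (a * b - c) :=
  Units.ext rfl

theorem Munit_congr {a b c a' b' c' : ℤ} (h1 : a = a') (h2 : b = b') (h3 : c = c') :
    Munit a b c = Munit a' b' c' := by subst h1; subst h2; subst h3; rfl

/-- The integer Heisenberg group, as the subgroup of units of the `3×3` integer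
matrix ring consisting of the unipotent upper-triangular matrices `M(a,b,c)`. -/
def Heis : Subgroup (Matrix (Fin 3) (Fin 3) ℤ)ˣ where
  carrier := {x | ∃ a b c : ℤ, x = Munit a b c}
  one_mem' := ⟨0, 0, 0, Munit_one.symm⟩
  mul_mem' := by
    rintro x y ⟨a, b, c, rfl⟩ ⟨a', b', c', rfl⟩
    exact ⟨_, _, _, Munit_mul a b c a' b' c'⟩
  inv_mem' := by
    rintro x ⟨a, b, c, rfl⟩
    exact ⟨_, _, _, Munit_inv a b c⟩

/-- The homomorphism `Ψ : F → ℍ` with `Ψ(α) = M(1,0,0)` and `Ψ(β) = M(0,1,0)`. -/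
def Ψ : F →* (Matrix (Fin 3) (Fin 3) ℤ)ˣ :=
  FreeGroup.lift fun x => if x then Munit 0 1 0 else Munit 1 0 0

theorem Ψ_mem (g : F) : Ψ g ∈ Heis := by
  induction g using FreeGroup.induction_on with
  | C1 => exact Heis.one_mem
  | of x => cases x <;> · show Ψ (FreeGroup.of _) ∈ Heis; rw [Ψ, FreeGroup.lift_apply_of]; exact ⟨_, _, _, rfl⟩
  | inv_of x hx => rw [map_inv]; exact Heis.inv_mem hx
  | mul x y hx hy => rw [map_mul]; exact Heis.mul_mem hx hy

open scoped commutatorElement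

theorem Munit_commutator (a b c a' b' c' : ℤ) :
    ⁅Munit a b c, Munit a' b' c'⁆ = Munit 0 0 (a * b' - a' * b) := by
  rw [commutatorElement_def, Munit_inv, Munit_inv, Munit_mul, Munit_mul, Munit_mul]
  exact Munit_congr (by ring) (by ring) (by ring)

theorem Munit_central (z a b c : ℤ) : Munit 0 0 z * Munit a b c = Munit a b c * Munit 0 0 z := by
  rw [Munit_mul, Munit_mul]; exact Munit_congr (by ring) (by ring) (by ring)

theorem Heis_comm_central (g : F) (hg : g ∈ (⁅(⊤ : Subgroup F), ⊤⁆ : Subgroup F)) :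
    Ψ g ∈ Subgroup.centralizer (Heis : Set (Matrix (Fin 3) (Fin 3) ℤ)ˣ) := by
  have hle : (⁅(⊤ : Subgroup F), ⊤⁆ : Subgroup F) ≤
      Subgroup.comap Ψ (Subgroup.centralizer (Heis : Set (Matrix (Fin 3) (Fin 3) ℤ)ˣ)) := by
    rw [Subgroup.commutator_le]
    intro g₁ _ g₂ _
    rw [Subgroup.mem_comap, map_commutatorElement]
    obtain ⟨a, b, c, h1⟩ := Ψ_mem g₁
    obtain ⟨a', b', c', h2⟩ := Ψ_mem g₂
    rw [h1, h2, Munit_commutator]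
    rw [Subgroup.mem_centralizer_iff]
    rintro x ⟨p, q, r, rfl⟩
    exact (Munit_central _ _ _ _).symm
  exact hle hg

theorem F₃_le_ker : F₃ ≤ Ψ.ker := by
  show ⁅(⁅(⊤ : Subgroup F), ⊤⁆ : Subgroup F), ⊤⁆ ≤ Ψ.ker
  rw [Subgroup.commutator_le]
  intro g hg h _
  rw [MonoidHom.mem_ker, map_commutatorElement]
  have hc : Ψ h * Ψ g = Ψ g * Ψ h :=
    Subgroup.mem_centralizer_iff.mp (Heis_comm_central g hg) (Ψ h) (Ψ_mem h)
  rw [commutatorElement_def, ← hc]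
  group

/-- The induced homomorphism `ψ : H = F/F₃ → ℍ`. -/
def ψH : H →* Heis :=
  QuotientGroup.lift F₃ (Ψ.codRestrict Heis Ψ_mem)
    (fun g hg => by
      have : Ψ g = 1 := F₃_le_ker hg
      exact Subtype.ext (by simpa using this))

/-- The matrix of the image of `g ∈ H` in the Heisenberg group. -/
def mat (g : H) : Matrix (Fin 3) (Fin 3) ℤ := ((ψH g : (Matrix (Fin 3) (Fin 3) ℤ)ˣ) : Matrix (Fin 3) (Fin 3) ℤ)

/-- `a(g)`: the exponent sum of `α` in `g` (the `(0,1)` entry of the Heisenberg matrix). -/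
def aH (g : H) : ℤ := mat g 0 1

/-- `b(g)`: the exponent sum of `β` in `g` (the `(1,2)` entry of the Heisenberg matrix). -/
def bH (g : H) : ℤ := mat g 1 2

/-- The Heisenberg invariant `ν(g)` of `g ∈ H`: the exponent of the central element
`[α,β]` in the unique normal form `g = [α,β]^ν α^a β^b`. -/
def νH (g : H) : ℤ := mat g 0 2 - aH g * bH g

/-- `a(g)` for a word `g` in the free group. -/
def aF (g : F) : ℤ := aH (QuotientGroup.mk g)

/-- `b(g)` for a word `g` in the free group. -/
def bF (g : F) : ℤ := bH (QuotientGroup.mk g)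

/-- The Heisenberg invariant of a word in the free group: the Heisenberg invariant of its
image in `H = F/F₃`. -/
def νF (g : F) : ℤ := νH (QuotientGroup.mk g)

/-! Words in the letters α, α⁻¹, β, β⁻¹ and foldings (RNA secondary structures). -/

/-- A letter is a pair `(x, s)` (the `FreeGroup` convention): `s = true` for a generator,
`s = false` for its inverse. -/
abbrev Letter : Type := Bool × Bool

/-- A word in the letters `α`, `α⁻¹`, `β`, `β⁻¹`. -/
abbrev Word : Type := List Letter

/-- The letter `α`. -/
def lα : Letter := (false, true)
/-- The letter `α⁻¹`. -/
def lαinv : Letter := (false, false)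
/-- The letter `β`. -/
def lβ : Letter := (true, true)
/-- The letter `β⁻¹`. -/
def lβinv : Letter := (true, false)

/-- The exponent sum of `α` in a word: #`α` − #`α⁻¹`. -/
def aw (w : Word) : ℤ := (w.count lα : ℤ) - (w.count lαinv : ℤ)

/-- The exponent sum of `β` in a word: #`β` − #`β⁻¹`. -/
def bw (w : Word) : ℤ := (w.count lβ : ℤ) - (w.count lβinv : ℤ)

/-- The cyclic subword `w(i,j)` strictly between positions `i` and `j` (`0`-indexed),
read counterclockwise: if `i < j` it is `l_{i+1} ⋯ l_{j-1}`, and if `i > j` it is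
`l_{i+1} ⋯ l_n l_1 ⋯ l_{j-1}` (0-indexed: wraps around the end). -/
def between (w : Word) (i j : ℕ) : Word :=
  if i < j then (w.drop (i + 1)).take (j - i - 1) else w.drop (i + 1) ++ w.take j

/-- A folding (RNA secondary structure without pseudo-knots) of the cyclic word `w`:
a collection of disjoint pairs `(i,j)` of positions with `l_i ∈ {α, β}` and `l_j` the
inverse letter, subject to the non-nesting (no pseudo-knot) condition. -/
structure Folding (w : Word) where
  /-- The set of paired positions. -/
  pairs : Finset (Fin w.length × Fin w.length)
  ne : ∀ p ∈ pairs, p.1 ≠ p.2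
  matched : ∀ p ∈ pairs,
    (w.get p.1 = lα ∧ w.get p.2 = lαinv) ∨ (w.get p.1 = lβ ∧ w.get p.2 = lβinv)
  disjoint : ∀ p ∈ pairs, ∀ q ∈ pairs, p ≠ q →
    p.1 ≠ q.1 ∧ p.1 ≠ q.2 ∧ p.2 ≠ q.1 ∧ p.2 ≠ q.2
  nonnested : ∀ p ∈ pairs, ∀ q ∈ pairs,
    (p.1 < q.1 ∧ q.1 < p.2 → p.1 < q.2 ∧ q.2 < p.2) ∧
    (p.2 < q.1 ∧ q.1 < p.1 → p.2 < q.2 ∧ q.2 < p.1)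

/-- A complete `α`-folding: every pair is an `α`-pair and every occurrence of the
letter `α` is paired. -/
def Folding.IsCompleteAlpha {w : Word} (𝓕 : Folding w) : Prop :=
  (∀ p ∈ 𝓕.pairs, w.get p.1 = lα) ∧
    ∀ i : Fin w.length, w.get i = lα → ∃ p ∈ 𝓕.pairs, p.1 = i


/-! The image of a word `w` under `Ψ` is `M(a, b, c)`, where `c = corner w` adds up, over the
letters `α^{±1}` of `w`, `±` the `β`-exponent sum of the suffix after that letter; when
`a = b = 0` this `c` is `ν`. Any two suffix sums differ by the `β`-exponent sum of a subword,
which lies between `-n_{β⁻¹} = -n_β` and `n_β`, so all suffix sums lie in `[T - n_β, T]` for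
their maximum `T`. Hence `c ≤ T n_α - (T - n_β) n_{α⁻¹} = n_α n_β`. Finally
`n = 2(n_α + n_β)` and AM-GM give `n_α n_β ≤ (n/4)²`. -/

def corner : Word → ℤ
  | [] => 0
  | l :: t => aw [l] * bw t + corner t

lemma aw_append (s t : Word) : aw (s ++ t) = aw s + aw t := by
  simp only [aw, List.count_append]; push_cast; ring

lemma bw_append (s t : Word) : bw (s ++ t) = bw s + bw t := by
  simp only [bw, List.count_append]; push_cast; ring

lemma length_eq_sum_count (w : Word) :
    w.length = w.count lα + w.count lαinv + w.count lβ + w.count lβinv := by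
  induction w with
  | nil => rfl
  | cons l t ih =>
    obtain ⟨x, s⟩ := l
    cases x <;> cases s <;> simp [lα, lαinv, lβ, lβinv, ih] <;> omega

lemma Ψ_mk_singleton (l : Letter) : Ψ (FreeGroup.mk [l]) = Munit (aw [l]) (bw [l]) 0 := by
  obtain ⟨x, s⟩ := l
  cases x <;> cases s <;>
    simp [Ψ, FreeGroup.lift_mk, aw, bw, lα, lαinv, lβ, lβinv, Munit_inv]

lemma Ψ_mk (w : Word) : Ψ (FreeGroup.mk w) = Munit (aw w) (bw w) (corner w) := by
  induction w with
  | nil => exact Munit_one.symm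
  | cons l t ih =>
    rw [← List.singleton_append, ← FreeGroup.mul_mk, map_mul, ih, Ψ_mk_singleton, Munit_mul,
      aw_append, bw_append]
    exact Munit_congr rfl rfl (by rw [List.singleton_append, corner]; ring)

lemma mat_mk (w : Word) :
    mat (QuotientGroup.mk (FreeGroup.mk w)) = Mmat (aw w) (bw w) (corner w) :=
  congrArg Units.val (Ψ_mk w)

lemma aF_mk (w : Word) : aF (FreeGroup.mk w) = aw w := by
  rw [aF, aH, mat_mk]; rfl

lemma bF_mk (w : Word) : bF (FreeGroup.mk w) = bw w := by
  rw [bF, bH, mat_mk]; rfl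

lemma νF_mk (w : Word) : νF (FreeGroup.mk w) = corner w - aw w * bw w := by
  rw [νF, νH, aH, bH, mat_mk]; rfl

lemma bw_le_count_of_sublist {u w : Word} (h : u.Sublist w) :
    bw u ≤ w.count lβ ∧ -bw u ≤ w.count lβinv := by
  have hβ := h.count_le lβ
  have hβinv := h.count_le lβinv
  simp only [bw]
  omega

lemma bw_sub_bw_le_of_suffix {s₁ s₂ w : Word} (h₁ : s₁ <:+ w) (h₂ : s₂ <:+ w)
    (hβ : w.count lβ = w.count lβinv) : bw s₁ - bw s₂ ≤ w.count lβ := by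
  rcases List.suffix_or_suffix_of_suffix h₁ h₂ with ⟨u, rfl⟩ | ⟨u, rfl⟩
  · have := bw_le_count_of_sublist ((List.sublist_append_left u s₁).trans h₂.sublist)
    rw [bw_append]
    omega
  · have := bw_le_count_of_sublist ((List.sublist_append_left u s₂).trans h₁.sublist)
    rw [bw_append]
    omega

lemma corner_le_of_bw_suffix_bounds {w : Word} {m M : ℤ}
    (h : ∀ s, s <:+ w → m ≤ bw s ∧ bw s ≤ M) :
    corner w ≤ M * w.count lα - m * w.count lαinv := by
  induction w with
  | nil => simp [corner]
  | cons l t ih =>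
    obtain ⟨hm, hM⟩ := h t (List.suffix_cons l t)
    have ih := ih fun s hs => h s (hs.trans (List.suffix_cons l t))
    have hcount (a : Letter) : (l :: t).count a = [l].count a + t.count a := by
      rw [← List.count_append]; rfl
    rw [corner, aw, hcount, hcount]
    push_cast
    linarith [mul_le_mul_of_nonneg_left hM (Nat.cast_nonneg ([l].count lα) : (0 : ℤ) ≤ _),
      mul_le_mul_of_nonneg_left hm (Nat.cast_nonneg ([l].count lαinv) : (0 : ℤ) ≤ _)]

lemma corner_le_count_mul_count {w : Word} (hα : w.count lα = w.count lαinv)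
    (hβ : w.count lβ = w.count lβinv) : corner w ≤ w.count lα * w.count lβ := by
  obtain ⟨s₀, hs₀, hmax⟩ := w.tails.toFinset.exists_max_image bw
    ⟨w, List.mem_toFinset.2 ((List.mem_tails _ _).2 (List.suffix_refl w))⟩
  have hs₀ : s₀ <:+ w := (List.mem_tails _ _).1 (List.mem_toFinset.1 hs₀)
  have hbounds : ∀ s, s <:+ w → bw s₀ - w.count lβ ≤ bw s ∧ bw s ≤ bw s₀ := fun s hs =>
    ⟨by linarith [bw_sub_bw_le_of_suffix hs₀ hs hβ],
      hmax s (List.mem_toFinset.2 ((List.mem_tails _ _).2 hs))⟩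
  have hcorner := corner_le_of_bw_suffix_bounds hbounds
  rw [← hα] at hcorner
  linarith

/-- for a word `g` of length `n` with `a(g) = b(g) = 0`, with `n_α`
(resp. `n_β`) the number of letters `α` (resp. `β`), one has
`ν(g) ≤ n_α n_β ≤ (n/4)²` (the latter stated as `16 n_α n_β ≤ n²`). -/
theorem statement_12 (w : Word) (ha : aF (FreeGroup.mk w) = 0) (hb : bF (FreeGroup.mk w) = 0) :
    νF (FreeGroup.mk w) ≤ (w.count lα : ℤ) * (w.count lβ : ℤ) ∧
    16 * ((w.count lα : ℤ) * (w.count lβ : ℤ)) ≤ (w.length : ℤ) ^ 2 := by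
  rw [aF_mk, aw] at ha
  rw [bF_mk, bw] at hb
  have hα : w.count lα = w.count lαinv := by omega
  have hβ : w.count lβ = w.count lβinv := by omega
  have hlength : (w.length : ℤ) = 2 * w.count lα + 2 * w.count lβ := by
    rw [length_eq_sum_count, hα, hβ]; push_cast; ring
  refine ⟨?_, ?_⟩
  · rw [νF_mk, aw, bw, ha, hb, zero_mul, sub_zero]
    exact corner_le_count_mul_count hα hβ
  · rw [hlength]
    nlinarith [sq_nonneg ((w.count lα : ℤ) - w.count lβ)]

end
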